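/- There is a well-defined function φ : 𝒯 → ω, invariant under conversion, satisfying φ(T)=2 if T ≃ Prop, φ(T)=3+j if T ≃ Type_j, φ(T)=1 for all other T ∈ Π_0, and φ(T)=φ(A)·φ(B) whenever T ≃ Qx:A.B for Q ∈ {Π,Σ}; moreover φ takes only positive values. -/

import Mathlib

namespace ECC

/-- Terms of Luo's Extended Calculus of Constructions, in de Bruijn representation. -/
inductive Term : Type
  | var   : ℕ → Term
  | prop  : Term
  | type  : ℕ → Term
  | pi    : Term → Term → Term
  | sigma : Term → Term → Term
  | lam   : Term → Term → Term
  | app   : Term → Term → Term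
  | pair  : Term → Term → Term → Term   -- ⟨M, N⟩_B with type annotation B
  | proj1 : Term → Term
  | proj2 : Term → Term
deriving DecidableEq

/-- Lift (shift by `d`) all de Bruijn indices ≥ `k`. -/
def lift (d : ℕ) : ℕ → Term → Term
  | k, .var n       => if n < k then .var n else .var (n + d)
  | _, .prop        => .prop
  | _, .type j      => .type j
  | k, .pi A B      => .pi (lift d k A) (lift d (k+1) B)
  | k, .sigma A B   => .sigma (lift d k A) (lift d (k+1) B)
  | k, .lam A M     => .lam (lift d k A) (lift d (k+1) M)
  | k, .app M N     => .app (lift d k M) (lift d k N)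
  | k, .pair M N B  => .pair (lift d k M) (lift d k N) (lift d k B)
  | k, .proj1 M     => .proj1 (lift d k M)
  | k, .proj2 M     => .proj2 (lift d k M)

/-- Capture-avoiding substitution `[N/x]A` of the term `N` for the variable `x` in `A`. -/
def subst (N : Term) : ℕ → Term → Term
  | k, .var n       => if n < k then .var n else if n = k then lift k 0 N else .var (n - 1)
  | _, .prop        => .prop
  | _, .type j      => .type j
  | k, .pi A B      => .pi (subst N k A) (subst N (k+1) B)
  | k, .sigma A B   => .sigma (subst N k A) (subst N (k+1) B)
  | k, .lam A M     => .lam (subst N k A) (subst N (k+1) M)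
  | k, .app M M'    => .app (subst N k M) (subst N k M')
  | k, .pair M M' B => .pair (subst N k M) (subst N k M') (subst N k B)
  | k, .proj1 M     => .proj1 (subst N k M)
  | k, .proj2 M     => .proj2 (subst N k M)

/-- `[N/x₀]B` : substitution for the outermost bound variable. -/
def subst0 (B N : Term) : Term := subst N 0 B

/-- One-step reduction (β together with the projection reductions, closed under all
term-formation congruences). -/
inductive Red : Term → Term → Prop
  | beta    : Red (.app (.lam A M) N) (subst0 M N)
  | pr1     : Red (.proj1 (.pair M N B)) M
  | pr2     : Red (.proj2 (.pair M N B)) N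
  | piL     : Red A A' → Red (.pi A B) (.pi A' B)
  | piR     : Red B B' → Red (.pi A B) (.pi A B')
  | sigmaL  : Red A A' → Red (.sigma A B) (.sigma A' B)
  | sigmaR  : Red B B' → Red (.sigma A B) (.sigma A B')
  | lamL    : Red A A' → Red (.lam A M) (.lam A' M)
  | lamR    : Red M M' → Red (.lam A M) (.lam A M')
  | appL    : Red M M' → Red (.app M N) (.app M' N)
  | appR    : Red N N' → Red (.app M N) (.app M N')
  | pairL   : Red M M' → Red (.pair M N B) (.pair M' N B)
  | pairR   : Red N N' → Red (.pair M N B) (.pair M N' B)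
  | pairB   : Red B B' → Red (.pair M N B) (.pair M N B')
  | proj1C  : Red M M' → Red (.proj1 M) (.proj1 M')
  | proj2C  : Red M M' → Red (.proj2 M) (.proj2 M')

/-- Conversion `≃` : the equivalence relation generated by reduction. -/
def Conv : Term → Term → Prop := Relation.EqvGen Red

/-- `A` has a normal form. -/
def HasNF (A : Term) : Prop :=
  ∃ B, Relation.ReflTransGen Red A B ∧ ∀ C, ¬ Red B C

/-- `𝒯` : the set of normalisable terms. -/
def Tset : Set Term := {A | HasNF A}

/-- Universes are `Prop` and the `Type_j`. -/
def IsUniv (T : Term) : Prop := T = .prop ∨ ∃ j, T = .type j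

/-- The cumulativity relation `⪯` : the smallest preorder containing conversion,
the universe order, congruence for Π in the codomain, and congruence for Σ in both
components. -/
inductive Cum : Term → Term → Prop
  | conv     : Conv A B → Cum A B
  | propType : Cum .prop (.type 0)
  | typeType : j ≤ k → Cum (.type j) (.type k)
  | pi       : Conv A A' → Cum B B' → Cum (.pi A B) (.pi A' B')
  | sigma    : Cum A A' → Cum B B' → Cum (.sigma A B) (.sigma A' B')
  | trans    : Cum A B → Cum B C → Cum A C

/-- The strict cumulativity relation `≺` : `A ⪯ B` and `A ≄ B`. -/
def SCum (A B : Term) : Prop := Cum A B ∧ ¬ Conv A B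

/-- The stratified cumulativity relations `⪯ᵢ`. -/
inductive CumL : ℕ → Term → Term → Prop
  | conv     : Conv A B → CumL i A B
  | propType : CumL i .prop (.type j)
  | typeType : j < k → CumL i (.type j) (.type k)
  | succ     : CumL i A B → CumL (i+1) A B
  | pi       : Conv M (.pi A B) → Conv N (.pi A' B') → Conv A A' → CumL i B B' →
               CumL (i+1) M N
  | sigma    : Conv M (.sigma A B) → Conv N (.sigma A' B') → CumL i A A' → CumL i B B' →
               CumL (i+1) M N

/-- Strict stratified cumulativity `≺ᵢ`. -/
def SCumL (i : ℕ) (A B : Term) : Prop := CumL i A B ∧ ¬ Conv A B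

/-- Is the outermost symbol of a term Π or Σ? -/
def BinderHeaded : Term → Prop
  | .pi _ _    => True
  | .sigma _ _ => True
  | _          => False

/-- The base stratum: normalisable terms not convertible to a binder-headed
normalisable term. -/
def Base : Set Term :=
  {T | HasNF T ∧ ¬ ∃ B, HasNF B ∧ BinderHeaded B ∧ Conv T B}

/-- The stratification `(Π_n, Σ_n)` of `𝒯`. -/
def Strata : ℕ → Set Term × Set Term
  | 0 => (Base, Base)
  | n+1 =>
    ({T | ∃ k l, ∃ _ : k + l = n, ∃ A B, HasNF (Term.pi A B) ∧ Conv T (Term.pi A B) ∧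
        A ∈ (Strata k).1 ∪ (Strata k).2 ∧ B ∈ (Strata l).1 ∪ (Strata l).2},
     {T | ∃ k l, ∃ _ : k + l = n, ∃ A B, HasNF (Term.sigma A B) ∧ Conv T (Term.sigma A B) ∧
        A ∈ (Strata k).1 ∪ (Strata k).2 ∧ B ∈ (Strata l).1 ∪ (Strata l).2})
termination_by n => n
decreasing_by all_goals omega

/-- The stratum `Π_n`. -/
def PiStr (n : ℕ) : Set Term := (Strata n).1

/-- The stratum `Σ_n`. -/
def SigStr (n : ℕ) : Set Term := (Strata n).2

/-- The specification of the rank function `φ : 𝒯 → ω`. -/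
def PhiSpec (φ : Term → ℕ) : Prop :=
  (∀ M N, HasNF M → HasNF N → Conv M N → φ M = φ N) ∧
  (∀ T, HasNF T → Conv T .prop → φ T = 2) ∧
  (∀ T j, HasNF T → Conv T (.type j) → φ T = 3 + j) ∧
  (∀ T, T ∈ PiStr 0 → ¬ Conv T .prop → (∀ j, ¬ Conv T (.type j)) → φ T = 1) ∧
  (∀ T A B, HasNF T → (Conv T (.pi A B) ∨ Conv T (.sigma A B)) → φ T = φ A * φ B) ∧
  (∀ T, HasNF T → 0 < φ T)

mutual
/-- Valid contexts of ECC (de Bruijn: the head of the list is the most recent entry). -/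
inductive Valid : List Term → Prop
  | nil  : Valid []
  | cons : Typing Γ A (.type j) → Valid (A :: Γ)

/-- The typing judgement `Γ ⊢ M : A` of ECC. -/
inductive Typing : List Term → Term → Term → Prop
  | prop  : Valid Γ → Typing Γ .prop (.type 0)
  | type  : Valid Γ → Typing Γ (.type j) (.type (j+1))
  | var   : Valid Γ → Γ[n]? = some A → Typing Γ (.var n) (lift (n+1) 0 A)
  | pi1   : Typing Γ A (.type j) → Typing (A :: Γ) B .prop →
            Typing Γ (.pi A B) .prop
  | pi2   : Typing Γ A (.type j) → Typing (A :: Γ) B (.type j) →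
            Typing Γ (.pi A B) (.type j)
  | sig   : Typing Γ A (.type j) → Typing (A :: Γ) B (.type j) →
            Typing Γ (.sigma A B) (.type j)
  | lam   : Typing (A :: Γ) M B → Typing Γ (.lam A M) (.pi A B)
  | app   : Typing Γ M (.pi A B) → Typing Γ N A → Typing Γ (.app M N) (subst0 B N)
  | pair  : Typing Γ M A → Typing Γ N (subst0 B M) → Typing (A :: Γ) B (.type j) →
            Typing Γ (.pair M N (.sigma A B)) (.sigma A B)
  | proj1 : Typing Γ M (.sigma A B) → Typing Γ (.proj1 M) A
  | proj2 : Typing Γ M (.sigma A B) → Typing Γ (.proj2 M) (subst0 B (.proj1 M))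
  | cum   : Typing Γ M A → Typing Γ B (.type j) → Cum A B → Typing Γ M B
end

/-- `Type_j` for `j ∈ ℤ`, with the convention `Type_{-1} = Prop`. -/
def TType (j : ℤ) : Term := if j < 0 then .prop else .type j.toNat

/-- The typing judgement of the restricted system `ECC⁻`: the rules
`(Π2)(Σ)(app)(pair)(⪯)` of ECC are replaced by `(Π2')(Σ')(app')(pair')` and `(≃)_ρ`. -/
inductive TypingM : List Term → Term → Term → Prop
  | prop  : Valid Γ → TypingM Γ .prop (.type 0)
  | type  : Valid Γ → TypingM Γ (.type j) (.type (j+1))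
  | var   : Valid Γ → Γ[n]? = some A → TypingM Γ (.var n) (lift (n+1) 0 A)
  | pi1   : TypingM Γ A (.type j) → TypingM (A :: Γ) B .prop →
            TypingM Γ (.pi A B) .prop
  | pi2'  : TypingM Γ A (TType j) → TypingM (A :: Γ) B (TType k) → 0 ≤ k →
            TypingM Γ (.pi A B) (TType (max (max j k) 0))
  | sig'  : TypingM Γ A (TType j) → TypingM (A :: Γ) B (TType k) →
            TypingM Γ (.sigma A B) (TType (max (max j k) 0))
  | lam   : TypingM (A :: Γ) M B → TypingM Γ (.lam A M) (.pi A B)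
  | app'  : TypingM Γ M (.pi A B) → TypingM Γ N A' → Cum A' A →
            TypingM Γ (.app M N) (subst0 B N)
  | pair' : TypingM Γ M A → TypingM Γ N C → TypingM (A' :: Γ) B' (.type j) →
            Cum A A' → Cum C (subst0 B' M) →
            TypingM Γ (.pair M N (.sigma A' B')) (.sigma A' B')
  | proj1 : TypingM Γ M (.sigma A B) → TypingM Γ (.proj1 M) A
  | proj2 : TypingM Γ M (.sigma A B) → TypingM Γ (.proj2 M) (subst0 B (.proj1 M))
  | conv  : TypingM Γ M A → Conv A A' → Typing Γ A' (.type j) → TypingM Γ M A'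

end ECC

/-!
Reduction is confluent: parallel reduction lies between `Red` and `↠`, and every parallel
step out of `M` can be continued to Takahashi's complete development `dev M`, which gives the
diamond property. Hence a normalisable term has a unique normal form, and a term convertible
to a normal form reduces to it. In particular a normal form convertible to `Π x:A. B` is
itself `Π x:A'. B'` with `A ↠ A'` and `B ↠ B'` (likewise for `Σ`), so `φ` can be read off
the normal form by the structural recursion `headRank`.
-/

namespace ECC

theorem lift_lift_comm (d e : ℕ) (N : Term) {i k : ℕ} (h : i ≤ k) :
    lift d (k + e) (lift e i N) = lift e i (lift d k N) := by
  induction N generalizing i k with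
  | var n => grind [lift]
  | prop | type => rfl
  | pi _ _ ihA ihB | sigma _ _ ihA ihB | lam _ _ ihA ihB =>
    simp only [lift]; rw [ihA h, Nat.add_right_comm, ihB (Nat.succ_le_succ h)]
  | app _ _ ihM ihN => simp only [lift, ihM h, ihN h]
  | pair _ _ _ ihM ihN ihB => simp only [lift, ihM h, ihN h, ihB h]
  | proj1 _ ih | proj2 _ ih => simp only [lift, ih h]

theorem lift_lift_add (d e : ℕ) (N : Term) {i k : ℕ} (h₁ : i ≤ k) (h₂ : k ≤ i + e) :
    lift d k (lift e i N) = lift (d + e) i N := by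
  induction N generalizing i k with
  | var n => grind [lift]
  | prop | type => rfl
  | pi _ _ ihA ihB | sigma _ _ ihA ihB | lam _ _ ihA ihB =>
    simp only [lift]; rw [ihA h₁ h₂, ihB (by omega) (by omega)]
  | app _ _ ihM ihN => simp only [lift, ihM h₁ h₂, ihN h₁ h₂]
  | pair _ _ _ ihM ihN ihB => simp only [lift, ihM h₁ h₂, ihN h₁ h₂, ihB h₁ h₂]
  | proj1 _ ih | proj2 _ ih => simp only [lift, ih h₁ h₂]

theorem subst_lift_succ (Q : Term) (e : ℕ) (N : Term) {i j : ℕ} (h₁ : i ≤ j)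
    (h₂ : j ≤ i + e) :
    subst Q j (lift (e + 1) i N) = lift e i N := by
  induction N generalizing i j with
  | var n => grind [lift, subst]
  | prop | type => rfl
  | pi _ _ ihA ihB | sigma _ _ ihA ihB | lam _ _ ihA ihB =>
    simp only [lift, subst]; rw [ihA h₁ h₂, ihB (by omega) (by omega)]
  | app _ _ ihM ihN => simp only [lift, subst, ihM h₁ h₂, ihN h₁ h₂]
  | pair _ _ _ ihM ihN ihB => simp only [lift, subst, ihM h₁ h₂, ihN h₁ h₂, ihB h₁ h₂]
  | proj1 _ ih | proj2 _ ih => simp only [lift, subst, ih h₁ h₂]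

theorem subst_lift_comm (N : Term) (e : ℕ) (P : Term) {i k : ℕ} (h : i ≤ k) :
    subst N (k + e) (lift e i P) = lift e i (subst N k P) := by
  induction P generalizing i k with
  | var n => grind [lift, subst, lift_lift_add]
  | prop | type => rfl
  | pi _ _ ihA ihB | sigma _ _ ihA ihB | lam _ _ ihA ihB =>
    simp only [lift, subst]; rw [ihA h, Nat.add_right_comm, ihB (Nat.succ_le_succ h)]
  | app _ _ ihM ihN => simp only [lift, subst, ihM h, ihN h]
  | pair _ _ _ ihM ihN ihB => simp only [lift, subst, ihM h, ihN h, ihB h]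
  | proj1 _ ih | proj2 _ ih => simp only [lift, subst, ih h]

theorem lift_subst (d : ℕ) (N M : Term) (j k : ℕ) :
    lift d (j + k) (subst N j M) = subst (lift d k N) j (lift d (j + k + 1) M) := by
  induction M generalizing j with
  | var n =>
    have hcomm := lift_lift_comm d j N (Nat.zero_le k)
    grind [lift, subst]
  | prop | type => rfl
  | pi _ _ ihA ihB | sigma _ _ ihA ihB | lam _ _ ihA ihB =>
    simp only [lift, subst]; rw [ihA, Nat.add_right_comm j k, ihB]
  | app _ _ ihM ihN => simp only [lift, subst, ihM, ihN]
  | pair _ _ _ ihM ihN ihB => simp only [lift, subst, ihM, ihN, ihB]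
  | proj1 _ ih | proj2 _ ih => simp only [lift, subst, ih]

theorem subst_subst (N P M : Term) (j k : ℕ) :
    subst N (j + k) (subst P j M) = subst (subst N k P) j (subst N (j + k + 1) M) := by
  induction M generalizing j with
  | var n =>
    have hcomm := subst_lift_comm N j P (Nat.zero_le k)
    have hcancel := subst_lift_succ (subst N k P) (j + k) N (Nat.zero_le j) (by omega)
    grind [subst]
  | prop | type => rfl
  | pi _ _ ihA ihB | sigma _ _ ihA ihB | lam _ _ ihA ihB =>
    simp only [subst]; rw [ihA, Nat.add_right_comm j k, ihB]
  | app _ _ ihM ihN => simp only [subst, ihM, ihN]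
  | pair _ _ _ ihM ihN ihB => simp only [subst, ihM, ihN, ihB]
  | proj1 _ ih | proj2 _ ih => simp only [subst, ih]

theorem lift_subst0 (d k : ℕ) (M N : Term) :
    lift d k (subst0 M N) = subst0 (lift d (k + 1) M) (lift d k N) := by
  simpa [subst0] using lift_subst d N M 0 k

theorem subst_subst0 (P : Term) (k : ℕ) (M N : Term) :
    subst P k (subst0 M N) = subst0 (subst P (k + 1) M) (subst P k N) := by
  simpa [subst0] using subst_subst P N M 0 k

open Relation

local infix:50 " ↠ " => ReflTransGen Red

inductive ParRed : Term → Term → Prop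
  | var   : ParRed (.var n) (.var n)
  | prop  : ParRed .prop .prop
  | type  : ParRed (.type j) (.type j)
  | pi    : ParRed A A' → ParRed B B' → ParRed (.pi A B) (.pi A' B')
  | sigma : ParRed A A' → ParRed B B' → ParRed (.sigma A B) (.sigma A' B')
  | lam   : ParRed A A' → ParRed M M' → ParRed (.lam A M) (.lam A' M')
  | app   : ParRed M M' → ParRed N N' → ParRed (.app M N) (.app M' N')
  | pair  : ParRed M M' → ParRed N N' → ParRed B B' → ParRed (.pair M N B) (.pair M' N' B')
  | proj1 : ParRed M M' → ParRed (.proj1 M) (.proj1 M')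
  | proj2 : ParRed M M' → ParRed (.proj2 M) (.proj2 M')
  | beta  : ParRed M M' → ParRed N N' → ParRed (.app (.lam A M) N) (subst0 M' N')
  | pr1   : ParRed M M' → ParRed (.proj1 (.pair M N B)) M'
  | pr2   : ParRed N N' → ParRed (.proj2 (.pair M N B)) N'

namespace ParRed

theorem refl (M : Term) : ParRed M M := by
  induction M <;> constructor <;> assumption

theorem of_red (h : Red M N) : ParRed M N := by
  induction h with
  | beta => exact beta (refl _) (refl _)
  | pr1 => exact pr1 (refl _)
  | pr2 => exact pr2 (refl _)
  | piL _ ih => exact pi ih (refl _)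
  | piR _ ih => exact pi (refl _) ih
  | sigmaL _ ih => exact sigma ih (refl _)
  | sigmaR _ ih => exact sigma (refl _) ih
  | lamL _ ih => exact lam ih (refl _)
  | lamR _ ih => exact lam (refl _) ih
  | appL _ ih => exact app ih (refl _)
  | appR _ ih => exact app (refl _) ih
  | pairL _ ih => exact pair ih (refl _) (refl _)
  | pairR _ ih => exact pair (refl _) ih (refl _)
  | pairB _ ih => exact pair (refl _) (refl _) ih
  | proj1C _ ih => exact proj1 ih
  | proj2C _ ih => exact proj2 ih

end ParRed

theorem reflTransGen_red_congr₂ (f : Term → Term → Term)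
    (hl : ∀ {A A' B}, Red A A' → Red (f A B) (f A' B))
    (hr : ∀ {A B B'}, Red B B' → Red (f A B) (f A B'))
    (hA : A ↠ A') (hB : B ↠ B') : f A B ↠ f A' B' :=
  (hA.lift (f · B) fun _ _ => hl).trans (hB.lift (f A' ·) fun _ _ => hr)

theorem ParRed.reflTransGen (h : ParRed M N) : M ↠ N := by
  induction h with
  | var | prop | type => exact .refl
  | pi _ _ ihA ihB => exact reflTransGen_red_congr₂ Term.pi .piL .piR ihA ihB
  | sigma _ _ ihA ihB => exact reflTransGen_red_congr₂ Term.sigma .sigmaL .sigmaR ihA ihB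
  | lam _ _ ihA ihM => exact reflTransGen_red_congr₂ Term.lam .lamL .lamR ihA ihM
  | app _ _ ihM ihN => exact reflTransGen_red_congr₂ Term.app .appL .appR ihM ihN
  | @pair M M' N N' B B' _ _ _ ihM ihN ihB =>
    exact (reflTransGen_red_congr₂ (.pair · · B) .pairL .pairR ihM ihN).trans
      (ihB.lift _ fun _ _ => .pairB)
  | proj1 _ ih => exact ih.lift _ fun _ _ => .proj1C
  | proj2 _ ih => exact ih.lift _ fun _ _ => .proj2C
  | beta _ _ ihM ihN =>
    exact (reflTransGen_red_congr₂ Term.app .appL .appR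
      (reflTransGen_red_congr₂ Term.lam .lamL .lamR .refl ihM) ihN).tail .beta
  | @pr1 M M' N B _ ih =>
    exact (ih.lift (fun X => Term.proj1 (.pair X N B)) fun _ _ h => .proj1C (.pairL h)).tail .pr1
  | @pr2 N N' M B _ ih =>
    exact (ih.lift (fun X => Term.proj2 (.pair M X B)) fun _ _ h => .proj2C (.pairR h)).tail .pr2

theorem ParRed.lift (h : ParRed M N) (d k : ℕ) : ParRed (lift d k M) (lift d k N) := by
  induction h generalizing k with
  | var => simp only [ECC.lift]; split_ifs <;> exact var
  | prop => exact prop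
  | type => exact type
  | pi _ _ ihA ihB => exact pi (ihA k) (ihB (k + 1))
  | sigma _ _ ihA ihB => exact sigma (ihA k) (ihB (k + 1))
  | lam _ _ ihA ihM => exact lam (ihA k) (ihM (k + 1))
  | app _ _ ihM ihN => exact app (ihM k) (ihN k)
  | pair _ _ _ ihM ihN ihB => exact pair (ihM k) (ihN k) (ihB k)
  | proj1 _ ih => exact proj1 (ih k)
  | proj2 _ ih => exact proj2 (ih k)
  | beta _ _ ihM ihN => rw [lift_subst0]; exact beta (ihM (k + 1)) (ihN k)
  | pr1 _ ih => exact pr1 (ih k)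
  | pr2 _ ih => exact pr2 (ih k)

theorem ParRed.subst (hN : ParRed N N') (h : ParRed M M') (k : ℕ) :
    ParRed (subst N k M) (subst N' k M') := by
  induction h generalizing k with
  | var => simp only [ECC.subst]; split_ifs <;> first | exact var | exact hN.lift k 0
  | prop => exact prop
  | type => exact type
  | pi _ _ ihA ihB => exact pi (ihA k) (ihB (k + 1))
  | sigma _ _ ihA ihB => exact sigma (ihA k) (ihB (k + 1))
  | lam _ _ ihA ihM => exact lam (ihA k) (ihM (k + 1))
  | app _ _ ihM ihN => exact app (ihM k) (ihN k)
  | pair _ _ _ ihM ihN ihB => exact pair (ihM k) (ihN k) (ihB k)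
  | proj1 _ ih => exact proj1 (ih k)
  | proj2 _ ih => exact proj2 (ih k)
  | beta _ _ ihM ihN => rw [subst_subst0]; exact beta (ihM (k + 1)) (ihN k)
  | pr1 _ ih => exact pr1 (ih k)
  | pr2 _ ih => exact pr2 (ih k)

def dev : Term → Term
  | .var n => .var n
  | .prop => .prop
  | .type j => .type j
  | .pi A B => .pi (dev A) (dev B)
  | .sigma A B => .sigma (dev A) (dev B)
  | .lam A M => .lam (dev A) (dev M)
  | .app (.lam _ M) N => subst0 (dev M) (dev N)
  | .app M N => .app (dev M) (dev N)
  | .pair M N B => .pair (dev M) (dev N) (dev B)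
  | .proj1 (.pair M _ _) => dev M
  | .proj1 M => .proj1 (dev M)
  | .proj2 (.pair _ N _) => dev N
  | .proj2 M => .proj2 (dev M)

theorem ParRed.triangle (h : ParRed M N) : ParRed N (dev M) := by
  induction h with
  | var => exact var
  | prop => exact prop
  | type => exact type
  | pi _ _ ihA ihB => exact pi ihA ihB
  | sigma _ _ ihA ihB => exact sigma ihA ihB
  | lam _ _ ihA ihM => exact lam ihA ihM
  | app hM _ ihM ihN =>
    cases hM with
    | lam => cases ihM with | lam _ ihM => exact beta ihM ihN
    | _ => exact app ihM ihN
  | pair _ _ _ ihM ihN ihB => exact pair ihM ihN ihB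
  | proj1 hM ih =>
    cases hM with
    | pair => cases ih with | pair ih _ _ => exact pr1 ih
    | _ => exact proj1 ih
  | proj2 hM ih =>
    cases hM with
    | pair => cases ih with | pair _ ih _ => exact pr2 ih
    | _ => exact proj2 ih
  | beta _ _ ihM ihN => exact ihN.subst ihM 0
  | pr1 _ ih => exact ih
  | pr2 _ ih => exact ih

theorem reflTransGen_parRed_eq : ReflTransGen ParRed = ReflTransGen Red :=
  le_antisymm (reflTransGen_closed fun _ _ => ParRed.reflTransGen)
    (ReflTransGen.mono fun _ _ => ParRed.of_red)

theorem join_of_reflTransGen (h₁ : M ↠ N₁) (h₂ : M ↠ N₂) :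
    Join (ReflTransGen Red) N₁ N₂ := by
  rw [← reflTransGen_parRed_eq] at *
  exact church_rosser
    (fun M _ _ h₁ h₂ => ⟨dev M, .single h₁.triangle, .single h₂.triangle⟩) h₁ h₂

theorem Conv.of_reflTransGen (h : M ↠ N) : Conv M N :=
  EqvGen.reflTransGen_le_eqvGen Red _ _ h

theorem Conv.join (h : Conv M N) : Join (ReflTransGen Red) M N :=
  (equivalence_join fun _ _ _ => join_of_reflTransGen).eqvGen_iff.1
    (EqvGen.mono (fun _ _ h => ⟨_, .single h, .refl⟩) _ _ h)

def Normal (N : Term) : Prop := ∀ C, ¬ Red N C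

theorem Normal.eq_of_reflTransGen (hN : Normal N) (h : N ↠ C) : N = C := by
  rcases h.cases_head with rfl | ⟨D, hND, -⟩
  · rfl
  · exact absurd hND (hN D)

theorem Normal.eq_of_reflTransGen_of_reflTransGen (hN₁ : Normal N₁) (h₁ : M ↠ N₁)
    (h₂ : M ↠ N₂) (hN₂ : Normal N₂) : N₁ = N₂ := by
  obtain ⟨L, h₁L, h₂L⟩ := join_of_reflTransGen h₁ h₂
  rw [hN₁.eq_of_reflTransGen h₁L, hN₂.eq_of_reflTransGen h₂L]

theorem Conv.reflTransGen_of_normal (h : Conv M N) (hN : Normal N) : M ↠ N := by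
  obtain ⟨L, hML, hNL⟩ := h.join
  rwa [hN.eq_of_reflTransGen hNL]

theorem reflTransGen_pi_inv (h : .pi A B ↠ X) :
    ∃ A' B', X = .pi A' B' ∧ A ↠ A' ∧ B ↠ B' := by
  induction h with
  | refl => exact ⟨A, B, rfl, .refl, .refl⟩
  | tail _ h ih =>
    obtain ⟨A', B', rfl, hA, hB⟩ := ih
    cases h with
    | piL h => exact ⟨_, B', rfl, hA.tail h, hB⟩
    | piR h => exact ⟨A', _, rfl, hA, hB.tail h⟩

theorem reflTransGen_sigma_inv (h : .sigma A B ↠ X) :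
    ∃ A' B', X = .sigma A' B' ∧ A ↠ A' ∧ B ↠ B' := by
  induction h with
  | refl => exact ⟨A, B, rfl, .refl, .refl⟩
  | tail _ h ih =>
    obtain ⟨A', B', rfl, hA, hB⟩ := ih
    cases h with
    | sigmaL h => exact ⟨_, B', rfl, hA.tail h, hB⟩
    | sigmaR h => exact ⟨A', _, rfl, hA, hB.tail h⟩

theorem Normal.of_pi (h : Normal (.pi A B)) : Normal A ∧ Normal B :=
  ⟨fun _ hA => h _ (.piL hA), fun _ hB => h _ (.piR hB)⟩

theorem Normal.of_sigma (h : Normal (.sigma A B)) : Normal A ∧ Normal B :=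
  ⟨fun _ hA => h _ (.sigmaL hA), fun _ hB => h _ (.sigmaR hB)⟩

theorem normal_prop : Normal .prop := fun _ h => nomatch h

theorem normal_type (j : ℕ) : Normal (.type j) := fun _ h => nomatch h

def headRank : Term → ℕ
  | .prop => 2
  | .type j => 3 + j
  | .pi A B => headRank A * headRank B
  | .sigma A B => headRank A * headRank B
  | _ => 1

theorem headRank_pos (T : Term) : 0 < headRank T := by
  induction T <;> simp_all [headRank]

theorem headRank_eq_one (hb : ¬ BinderHeaded T) (hp : T ≠ .prop) (ht : ∀ j, T ≠ .type j) :
    headRank T = 1 := by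
  cases T <;> simp_all [headRank, BinderHeaded]

open Classical in
noncomputable def rank (T : Term) : ℕ :=
  if h : HasNF T then headRank h.choose else 1

theorem rank_eq_headRank (h : T ↠ N) (hN : Normal N) : rank T = headRank N := by
  have hT : HasNF T := ⟨N, h, hN⟩
  obtain ⟨hTN₀, hN₀⟩ := hT.choose_spec
  rw [rank, dif_pos hT, Normal.eq_of_reflTransGen_of_reflTransGen hN₀ hTN₀ h hN]

theorem rank_pos (T : Term) : 0 < rank T := by
  unfold rank; split_ifs <;> simp [headRank_pos]

theorem rank_of_conv_prop (h : Conv T .prop) : rank T = 2 :=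
  rank_eq_headRank (h.reflTransGen_of_normal normal_prop) normal_prop

theorem rank_of_conv_type (h : Conv T (.type j)) : rank T = 3 + j :=
  rank_eq_headRank (h.reflTransGen_of_normal (normal_type j)) (normal_type j)

theorem rank_eq_of_conv (hN : HasNF N) (h : Conv M N) : rank M = rank N := by
  obtain ⟨N₀, hNN₀, hN₀ : Normal N₀⟩ := hN
  have hMN₀ : Conv M N₀ := EqvGen.trans _ _ _ h (Conv.of_reflTransGen hNN₀)
  rw [rank_eq_headRank hNN₀ hN₀, rank_eq_headRank (hMN₀.reflTransGen_of_normal hN₀) hN₀]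

theorem rank_of_conv_pi (hT : HasNF T) (h : Conv T (.pi A B)) : rank T = rank A * rank B := by
  obtain ⟨N, hTN, hN : Normal N⟩ := hT
  have hN' : Conv (.pi A B) N :=
    EqvGen.trans _ _ _ (EqvGen.symm _ _ h) (Conv.of_reflTransGen hTN)
  obtain ⟨A', B', rfl, hA, hB⟩ := reflTransGen_pi_inv (hN'.reflTransGen_of_normal hN)
  rw [rank_eq_headRank hTN hN, rank_eq_headRank hA hN.of_pi.1, rank_eq_headRank hB hN.of_pi.2]
  rfl

theorem rank_of_conv_sigma (hT : HasNF T) (h : Conv T (.sigma A B)) :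
    rank T = rank A * rank B := by
  obtain ⟨N, hTN, hN : Normal N⟩ := hT
  have hN' : Conv (.sigma A B) N :=
    EqvGen.trans _ _ _ (EqvGen.symm _ _ h) (Conv.of_reflTransGen hTN)
  obtain ⟨A', B', rfl, hA, hB⟩ := reflTransGen_sigma_inv (hN'.reflTransGen_of_normal hN)
  rw [rank_eq_headRank hTN hN, rank_eq_headRank hA hN.of_sigma.1,
    rank_eq_headRank hB hN.of_sigma.2]
  rfl

theorem rank_of_mem_base (hT : T ∈ Base) (hp : ¬ Conv T .prop)
    (ht : ∀ j, ¬ Conv T (.type j)) : rank T = 1 := by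
  obtain ⟨⟨N, hTN, hN : Normal N⟩, hnb⟩ := hT
  have hTN' : Conv T N := Conv.of_reflTransGen hTN
  rw [rank_eq_headRank hTN hN]
  refine headRank_eq_one (fun hb => hnb ⟨N, ⟨N, .refl, hN⟩, hb, hTN'⟩) ?_ ?_
  · rintro rfl; exact hp hTN'
  · rintro j rfl; exact ht j hTN'

theorem piStr_zero : PiStr 0 = Base := by
  rw [PiStr, Strata]

end ECC

/-- there is a well-defined, conversion-invariant rank function
`φ : 𝒯 → ω` with `φ(T)=2` if `T ≃ Prop`, `φ(T)=3+j` if `T ≃ Type_j`, `φ(T)=1` for all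
other `T ∈ Π₀`, `φ(T) = φ(A)·φ(B)` whenever `T ≃ Qx:A.B` for `Q ∈ {Π,Σ}`, and taking
only positive values. -/
theorem exists_rank_function : ∃ φ : ECC.Term → ℕ, ECC.PhiSpec φ :=
  ⟨ECC.rank, fun _ _ _ hN => ECC.rank_eq_of_conv hN, fun _ _ => ECC.rank_of_conv_prop,
    fun _ _ _ => ECC.rank_of_conv_type, fun _ hT => ECC.rank_of_mem_base (ECC.piStr_zero ▸ hT),
    fun _ _ _ hT h => h.elim (ECC.rank_of_conv_pi hT) (ECC.rank_of_conv_sigma hT),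
    fun T _ => ECC.rank_pos T⟩
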